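/- Let G be a graph with a bramble 𝓑 of order at least ℓ, and let S and T be vertex-disjoint subgraphs of G such that for each of V(S) and V(T), there is a subbramble of 𝓑 of order at least ℓ all of whose members intersect V(S), respectively V(T). Then G contains ℓ pairwise vertex-disjoint paths from V(S) to V(T). -/

import Mathlib

/-!
By Menger's theorem it suffices that no set `X` of fewer than `ℓ` vertices separates `S` from `T`.
Such an `X` hits neither all members of the first subbramble nor all members of the second, as
both have order at least `ℓ`; so some `b₁` meeting `S` and some `b₂` meeting `T` avoid `X`,
and the connected set `b₁ ∪ b₂` carries an `S`–`T` walk avoiding `X`.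

Menger's theorem itself follows Diestel's first proof. Contract an edge `xy`. If the contracted
graph has no separator of fewer than `k` vertices, its `k` disjoint paths lift to `G`. Otherwise
such a separator, with the contracted vertex replaced by `x` and `y`, is an `S`–`T` separator `X`
of exactly `k` vertices containing `x` and `y`; then every `S`–`X` or `X`–`T` separator of
`G - xy` separates `S` from `T` in `G`, and the two systems of `k` disjoint paths given by
induction in `G - xy` can meet only in `X`, where they are glued.
-/

open SimpleGraph

def IsBramble {V : Type*} (G : SimpleGraph V) (B : Set (Set V)) : Prop :=
  (∀ b ∈ B, (G.induce b).Connected) ∧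
    ∀ b ∈ B, ∀ b' ∈ B, (G.induce (b ∪ b')).Connected

def HitsAll {V : Type*} (B : Set (Set V)) (X : Set V) : Prop :=
  ∀ b ∈ B, (b ∩ X).Nonempty

noncomputable def brambleOrder {V : Type*} (B : Set (Set V)) : ℕ :=
  sInf {n | ∃ X : Set V, X.Finite ∧ HitsAll B X ∧ X.ncard = n}

namespace SimpleGraph

variable {V W : Type*} {G H : SimpleGraph V} {S T X Z : Set V} {k : ℕ}

def Separates (G : SimpleGraph V) (S T X : Set V) : Prop :=
  ∀ ⦃a b : V⦄, a ∈ S → b ∈ T → ∀ p : G.Walk a b, ∃ v ∈ p.support, v ∈ X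

def HasDisjointWalks (G : SimpleGraph V) (S T : Set V) (k : ℕ) : Prop :=
  ∃ (u v : Fin k → V) (p : ∀ i, G.Walk (u i) (v i)),
    (∀ i, u i ∈ S ∧ v i ∈ T) ∧ Pairwise fun i j => (p i).support.Disjoint (p j).support

lemma Separates.symm (h : Separates G S T X) : Separates G T S X := by
  intro a b ha hb p
  obtain ⟨v, hv, hvX⟩ := h hb ha p.reverse
  exact ⟨v, by simpa using hv, hvX⟩

lemma Separates.of_le (hHG : H ≤ G) (h : Separates G S T X) : Separates H S T X := by
  intro a b ha hb p
  simpa only [Walk.support_mapLe_eq_support] using h ha hb (p.mapLe hHG)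

lemma separates_inter_of_edgeSet_eq_empty (hG : G.edgeSet = ∅) : Separates G S T (S ∩ T) := by
  intro a b ha hb p
  cases p with
  | nil => exact ⟨a, by simp, ha, hb⟩
  | cons h _ => exact absurd (G.mem_edgeSet.mpr h) (hG ▸ Set.notMem_empty _)

lemma Walk.exists_isPath_to_first_mem [DecidableEq V] {a b : V} (p : G.Walk a b) (hb : b ∈ X) :
    ∃ c ∈ X, ∃ q : G.Walk a c,
      q.IsPath ∧ q.support ⊆ p.support ∧ ∀ v ∈ q.support, v ∈ X → v = c := by
  induction p with
  | nil => exact ⟨_, hb, .nil, .nil, by simp, by simp⟩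
  | @cons a a' b h p ih =>
    by_cases ha : a ∈ X
    · exact ⟨a, ha, .nil, .nil, by simp, by simp⟩
    obtain ⟨c, hc, q, -, hqp, hqX⟩ := ih hb
    have hsub : (Walk.cons h q).bypass.support ⊆ (Walk.cons h q).support :=
      Walk.support_bypass_subset_support _
    refine ⟨c, hc, _, Walk.bypass_isPath _,
      List.Subset.trans hsub (List.cons_subset_cons _ hqp), ?_⟩
    intro v hv hvX
    obtain rfl | hv := List.mem_cons.mp (hsub hv)
    · exact absurd hvX ha
    · exact hqX v hv hvX

lemma Walk.exists_walk_map (f : V → W) {a b : V} (p : G.Walk a b) :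
    ∃ q : (G.map f).Walk (f a) (f b), q.support ⊆ p.support.map f := by
  induction p with
  | nil => exact ⟨.nil, by simp⟩
  | @cons a c b h p ih =>
    obtain ⟨q, hq⟩ := ih
    by_cases hac : f a = f c
    · refine ⟨q.copy hac.symm rfl, ?_⟩
      simpa using List.Subset.trans hq (List.subset_cons_self _ _)
    · exact ⟨.cons (map_adj_apply' h hac) q, by simpa using List.cons_subset_cons _ hq⟩

lemma Walk.exists_lift {f : V → W}
    (hf : ∀ a b, f a = f b → ∃ p : G.Walk a b, ∀ v ∈ p.support, f v = f a)
    {c d : W} (q : (G.map f).Walk c d) {a b : V} (ha : f a = c) (hb : f b = d) :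
    ∃ p : G.Walk a b, ∀ v ∈ p.support, f v ∈ q.support := by
  induction q generalizing a with
  | nil =>
    obtain ⟨p, hp⟩ := hf a b (ha.trans hb.symm)
    exact ⟨p, fun v hv => by simp [hp v hv, ha]⟩
  | @cons c e d h q ih =>
    obtain ⟨-, a', e', hadj, ha', he'⟩ := h
    obtain ⟨p₀, hp₀⟩ := hf a a' (ha.trans ha'.symm)
    obtain ⟨p, hp⟩ := ih he' hb
    refine ⟨p₀.append (.cons hadj p), fun v hv => ?_⟩
    simp only [Walk.mem_support_append_iff, Walk.support_cons, List.mem_cons] at hv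
    rcases hv with hv | rfl | hv
    · simp [hp₀ v hv, ha]
    · simp [ha']
    · exact List.mem_cons_of_mem _ (hp v hv)

lemma Separates.preimage {f : V → W} {Y : Set W} (h : Separates (G.map f) (f '' S) (f '' T) Y) :
    Separates G S T (f ⁻¹' Y) := by
  intro a b ha hb p
  obtain ⟨q, hq⟩ := p.exists_walk_map f
  obtain ⟨w, hw, hwY⟩ := h ⟨a, ha, rfl⟩ ⟨b, hb, rfl⟩ q
  obtain ⟨v, hv, rfl⟩ := List.mem_map.mp (hq hw)
  exact ⟨v, hv, hwY⟩

namespace HasDisjointWalks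

lemma symm (h : HasDisjointWalks G S T k) : HasDisjointWalks G T S k := by
  obtain ⟨u, v, p, hends, hdisj⟩ := h
  refine ⟨v, u, fun i => (p i).reverse, fun i => (hends i).symm, fun i j hij w hi hj => ?_⟩
  simp only [Walk.support_reverse, List.mem_reverse] at hi hj
  exact hdisj hij hi hj

lemma mono (hGH : G ≤ H) (h : HasDisjointWalks G S T k) : HasDisjointWalks H S T k := by
  obtain ⟨u, v, p, hends, hdisj⟩ := h
  refine ⟨u, v, fun i => (p i).mapLe hGH, hends, fun i j hij => ?_⟩
  simpa only [Walk.support_mapLe_eq_support] using hdisj hij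

lemma of_map {f : V → W}
    (hf : ∀ a b, f a = f b → ∃ p : G.Walk a b, ∀ v ∈ p.support, f v = f a)
    (h : HasDisjointWalks (G.map f) (f '' S) (f '' T) k) : HasDisjointWalks G S T k := by
  obtain ⟨u, v, q, hends, hdisj⟩ := h
  choose a haS hau using fun i => (hends i).1
  choose b hbT hbv using fun i => (hends i).2
  choose p hp using fun i => Walk.exists_lift hf (q i) (hau i) (hbv i)
  exact ⟨a, b, p, fun i => ⟨haS i, hbT i⟩,
    fun i j hij z hi hj => hdisj hij (hp i z hi) (hp j z hj)⟩

lemma of_le_ncard_inter [Finite V] (h : k ≤ (S ∩ T).ncard) : HasDisjointWalks G S T k := by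
  let e := (Finite.equivFin ↥(S ∩ T)).symm
  let u : Fin k → V := fun i => e (Fin.castLE h i)
  have hu : Function.Injective u :=
    Subtype.val_injective.comp (e.injective.comp (Fin.castLE_injective h))
  refine ⟨u, u, fun _ => .nil, fun i => (e (Fin.castLE h i)).2, fun i j hij w hi hj => ?_⟩
  simp only [Walk.support_nil, List.mem_singleton] at hi hj
  exact hij (hu (hi.symm.trans hj))

lemma exists_isPath_first_mem [DecidableEq V] (h : HasDisjointWalks G S X k) :
    ∃ (u w : Fin k → V) (P : ∀ i, G.Walk (u i) (w i)),
      (∀ i, (P i).IsPath ∧ u i ∈ S ∧ w i ∈ X ∧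
        ∀ v ∈ (P i).support, v ∈ X → v = w i) ∧
      Pairwise fun i j => (P i).support.Disjoint (P j).support := by
  obtain ⟨u, v, p, hends, hdisj⟩ := h
  choose w hwX P hP hPp hPX using fun i => (p i).exists_isPath_to_first_mem (hends i).2
  exact ⟨u, w, P, fun i => ⟨hP i, (hends i).1, hwX i, hPX i⟩,
    fun i j hij z hi hj => hdisj hij (hPp i hi) (hPp j hj)⟩

end HasDisjointWalks

lemma injective_of_pairwise_disjoint_support {ι : Type*} {u v : ι → V}
    {p : ∀ i, G.Walk (u i) (v i)} (h : Pairwise fun i j => (p i).support.Disjoint (p j).support) :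
    Function.Injective v := fun i j hij => by
  by_contra hne
  exact h hne (p i).end_mem_support (by rw [hij]; exact (p j).end_mem_support)

lemma Separates.mem_of_mem_support_of_mem_support [DecidableEq V] (hX : Separates G S T X)
    {s t w w' z : V} (hs : s ∈ S) (ht : t ∈ T) (hw : w ∈ X) (hw' : w' ∈ X)
    {P : G.Walk s w} {Q : G.Walk t w'} (hP : P.IsPath) (hQ : Q.IsPath)
    (hPX : ∀ v ∈ P.support, v ∈ X → v = w) (hQX : ∀ v ∈ Q.support, v ∈ X → v = w')
    (hzP : z ∈ P.support) (hzQ : z ∈ Q.support) : z ∈ X := by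
  by_contra hz
  -- The `S`–`T` walk through `z` must meet `X`, yet its two halves are strict initial segments of
  -- the paths `P` and `Q`, which miss `w` and `w'`.
  obtain ⟨m, hm, hmX⟩ := hX hs ht ((P.takeUntil z hzP).append (Q.takeUntil z hzQ).reverse)
  rw [Walk.mem_support_append_iff, Walk.support_reverse, List.mem_reverse] at hm
  rcases hm with hm | hm
  · obtain rfl := hPX m (Walk.support_takeUntil_subset_support _ _ hm) hmX
    exact Walk.endpoint_notMem_support_takeUntil hP hzP (fun h => hz (h ▸ hw)) hm
  · obtain rfl := hQX m (Walk.support_takeUntil_subset_support _ _ hm) hmX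
    exact Walk.endpoint_notMem_support_takeUntil hQ hzQ (fun h => hz (h ▸ hw')) hm

lemma HasDisjointWalks.trans_of_separates [Finite V] (hX : Separates G S T X) (hXk : X.ncard = k)
    (h₁ : HasDisjointWalks G S X k) (h₂ : HasDisjointWalks G X T k) :
    HasDisjointWalks G S T k := by
  classical
  obtain ⟨u, w, P, hP, hPdisj⟩ := h₁.exists_isPath_first_mem
  obtain ⟨v, w', Q, hQ, hQdisj⟩ := h₂.symm.exists_isPath_first_mem
  have hwinj := injective_of_pairwise_disjoint_support hPdisj
  have hw'inj := injective_of_pairwise_disjoint_support hQdisj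
  have hrange : Set.range w' = X :=
    Set.eq_of_subset_of_ncard_le (Set.range_subset_iff.mpr fun j => (hQ j).2.2.1)
      (by rw [hXk, Set.ncard_range_of_injective hw'inj, Nat.card_fin])
  choose σ hσ using fun i => hrange ▸ (hP i).2.2.1
  have hσinj : Function.Injective σ := fun i j h => hwinj (by rw [← hσ i, ← hσ j, h])
  have hcross : ∀ i j z, z ∈ (P i).support → z ∈ (Q (σ j)).support → i = j := by
    intro i j z hi hj
    have hzX := hX.mem_of_mem_support_of_mem_support (hP i).2.1 (hQ (σ j)).2.1 (hP i).2.2.1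
      (hQ (σ j)).2.2.1 (hP i).1 (hQ (σ j)).1 (hP i).2.2.2 (hQ (σ j)).2.2.2 hi hj
    exact hwinj (((hP i).2.2.2 z hi hzX).symm.trans (((hQ (σ j)).2.2.2 z hj hzX).trans (hσ j)))
  refine ⟨u, fun i => v (σ i), fun i => (P i).append ((Q (σ i)).reverse.copy (hσ i) rfl),
    fun i => ⟨(hP i).2.1, (hQ (σ i)).2.1⟩, fun i j hij z hi hj => ?_⟩
  simp only [Walk.mem_support_append_iff, Walk.support_copy, Walk.support_reverse,
    List.mem_reverse] at hi hj
  rcases hi with hi | hi <;> rcases hj with hj | hj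
  · exact hPdisj hij hi hj
  · exact hij (hcross i j z hi hj)
  · exact hij (hcross j i z hj hi).symm
  · exact hQdisj (hσinj.ne hij) hi hj

lemma Separates.of_deleteEdges_left {D : Set (Sym2 V)} (hX : Separates G S T X)
    (hD : ∀ e ∈ D, ∀ v ∈ e, v ∈ X) (hZ : Separates (G.deleteEdges D) S X Z) :
    Separates G S T Z := by
  classical
  intro a b ha hb p
  obtain ⟨m, hm, hmX⟩ := hX ha hb p
  obtain ⟨c, hc, q, -, hqp, hqX⟩ := (p.takeUntil m hm).exists_isPath_to_first_mem hmX
  have hqD : ∀ e ∈ q.edges, e ∉ D := by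
    intro e he heD
    induction e using Sym2.ind with | _ x y => ?_
    obtain rfl := hqX x (q.fst_mem_support_of_mem_edges he) (hD _ heD x (Sym2.mem_mk_left x y))
    obtain rfl := hqX y (q.snd_mem_support_of_mem_edges he) (hD _ heD y (Sym2.mem_mk_right _ y))
    exact (G.mem_edgeSet.mp (q.edges_subset_edgeSet he)).ne rfl
  obtain ⟨v, hv, hvZ⟩ := hZ ha hc (q.toDeleteEdges D hqD)
  exact ⟨v, Walk.support_takeUntil_subset_support _ _ (hqp (by simpa using hv)), hvZ⟩

lemma Separates.of_deleteEdges_right {D : Set (Sym2 V)} (hX : Separates G S T X)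
    (hD : ∀ e ∈ D, ∀ v ∈ e, v ∈ X) (hZ : Separates (G.deleteEdges D) X T Z) :
    Separates G S T Z :=
  (hX.symm.of_deleteEdges_left hD hZ.symm).symm

section Contraction

-- `G.map (Function.update id y x)` is `G / xy`: the contracted vertex is `x`, and `y` is isolated.
variable [DecidableEq V] {x y : V}

lemma exists_walk_of_update_eq (hxy : G.Adj x y) (a b : V)
    (h : Function.update id y x a = Function.update id y x b) :
    ∃ p : G.Walk a b,
      ∀ v ∈ p.support, Function.update id y x v = Function.update id y x a := by
  by_cases ha : a = y <;> by_cases hb : b = y <;>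
    simp only [ha, hb, Function.update_self, ne_eq, not_false_eq_true,
      Function.update_of_ne, id_eq] at h
  · subst ha hb
    exact ⟨.nil, by simp⟩
  · subst ha h
    exact ⟨hxy.symm.toWalk, by simp [hxy.ne]⟩
  · subst hb h
    exact ⟨hxy.toWalk, by simp [hxy.ne]⟩
  · subst h
    exact ⟨.nil, by simp⟩

lemma support_map_update_ssubset (hxy : G.Adj x y) :
    (G.map (Function.update id y x)).support ⊂ G.support := by
  refine (Set.ssubset_iff_of_subset ?_).mpr ⟨y, ⟨x, hxy.symm⟩, ?_⟩
  · rintro _ ⟨_, -, a, b, hab, rfl, -⟩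
    by_cases ha : a = y
    · subst ha
      simpa using ⟨a, hxy⟩
    · simpa [ha] using ⟨b, hab⟩
  · rintro ⟨_, -, a, b, -, ha, -⟩
    by_cases hay : a = y <;> simp_all [hxy.ne]

lemma preimage_update_subset (x y : V) (Y : Set V) :
    Function.update id y x ⁻¹' Y ⊆ insert y Y := by
  intro v hv
  by_cases hvy : v = y
  · exact Or.inl hvy
  · exact Or.inr (by simpa [hvy] using hv)

lemma exists_separates_ncard_eq_of_separates_map_update [Finite V] (hxy : x ≠ y)
    (hG : ∀ X, Separates G S T X → k ≤ X.ncard) {W : Set V}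
    (hW : Separates (G.map (Function.update id y x)) (Function.update id y x '' S)
      (Function.update id y x '' T) W) (hWk : W.ncard < k) :
    ∃ X, Separates G S T X ∧ X.ncard = k ∧ x ∈ X ∧ y ∈ X := by
  have hkX := hG _ hW.preimage
  have hsub := preimage_update_subset x y W
  have hyX : y ∈ Function.update id y x ⁻¹' W := by
    by_contra hy
    have hXW : Function.update id y x ⁻¹' W ⊆ W := fun v hv =>
      (hsub hv).resolve_left (by rintro rfl; exact hy hv)
    have := Set.ncard_le_ncard hXW
    omega
  refine ⟨_, hW.preimage, le_antisymm ?_ hkX, by simpa [hxy] using hyX, hyX⟩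
  have := Set.ncard_le_ncard hsub
  have := Set.ncard_insert_le y W
  omega

end Contraction

theorem hasDisjointWalks_of_forall_separates [Finite V] (G : SimpleGraph V) (S T : Set V)
    (k : ℕ) (hG : ∀ X, Separates G S T X → k ≤ X.ncard) : HasDisjointWalks G S T k := by
  classical
  obtain hE | ⟨e, he⟩ := G.edgeSet.eq_empty_or_nonempty
  · exact .of_le_ncard_inter (hG _ (separates_inter_of_edgeSet_eq_empty hE))
  induction e using Sym2.ind with | _ x y => ?_
  rw [mem_edgeSet] at he
  by_cases hC : ∀ W, Separates (G.map (Function.update id y x)) (Function.update id y x '' S)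
      (Function.update id y x '' T) W → k ≤ W.ncard
  · exact (hasDisjointWalks_of_forall_separates _ _ _ k hC).of_map (exists_walk_of_update_eq he)
  push Not at hC
  obtain ⟨W, hW, hWk⟩ := hC
  obtain ⟨X, hX, hXk, hxX, hyX⟩ :=
    exists_separates_ncard_eq_of_separates_map_update he.ne hG hW hWk
  have hD : ∀ e ∈ ({s(x, y)} : Set (Sym2 V)), ∀ v ∈ e, v ∈ X := by
    simpa using ⟨hxX, hyX⟩
  have h₁ := hasDisjointWalks_of_forall_separates (G.deleteEdges {s(x, y)}) S X k
    fun Z hZ => hG Z (hX.of_deleteEdges_left hD hZ)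
  have h₂ := hasDisjointWalks_of_forall_separates (G.deleteEdges {s(x, y)}) X T k
    fun Z hZ => hG Z (hX.of_deleteEdges_right hD hZ)
  exact (h₁.trans_of_separates (hX.of_le (G.deleteEdges_le _)) hXk h₂).mono (G.deleteEdges_le _)
-- Contraction isolates `y`; deleting an edge isolates nothing new but loses an edge.
termination_by (G.support.ncard, G.edgeSet.ncard)
decreasing_by
  all_goals rw [Prod.lex_def]
  · classical exact Or.inl (Set.ncard_lt_ncard (support_map_update_ssubset he))
  all_goals
    have := Set.ncard_le_ncard (support_mono (G.deleteEdges_le {s(x, y)}))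
    have := Set.ncard_sdiff_singleton_lt_of_mem (s := G.edgeSet) (a := s(x, y)) he
    rw [edgeSet_deleteEdges]
    omega

end SimpleGraph

section Bramble

variable {V : Type*} {G : SimpleGraph V} {B : Set (Set V)} {S T X : Set V}

lemma brambleOrder_le_ncard (hX : X.Finite) (h : HitsAll B X) : brambleOrder B ≤ X.ncard :=
  Nat.sInf_le ⟨X, hX, h, rfl⟩

lemma exists_mem_disjoint_of_ncard_lt_brambleOrder (hX : X.Finite)
    (h : X.ncard < brambleOrder B) : ∃ b ∈ B, Disjoint b X := by
  by_contra! hB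
  refine (brambleOrder_le_ncard hX fun b hb => ?_).not_gt h
  exact Set.not_disjoint_iff_nonempty_inter.mp (hB b hb)

lemma SimpleGraph.Separates.inter_nonempty_of_induce_connected {c : Set V}
    (hX : G.Separates S T X) (hc : (G.induce c).Connected) (hS : (c ∩ S).Nonempty)
    (hT : (c ∩ T).Nonempty) : (c ∩ X).Nonempty := by
  obtain ⟨s, hsc, hsS⟩ := hS
  obtain ⟨t, htc, htT⟩ := hT
  obtain ⟨p⟩ := hc.preconnected ⟨s, hsc⟩ ⟨t, htc⟩
  obtain ⟨v, hv, hvX⟩ := hX hsS htT (p.map (Embedding.induce c).toHom)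
  obtain ⟨⟨v, hvc⟩, -, rfl⟩ :=
    List.mem_map.mp ((Walk.support_map (Embedding.induce c).toHom p) ▸ hv)
  exact ⟨v, hvc, hvX⟩

lemma IsBramble.le_ncard_of_separates {ℓ : ℕ} {B₁ B₂ : Set (Set V)} (hB : IsBramble G B)
    (hB₁ : B₁ ⊆ B) (hB₂ : B₂ ⊆ B) (hℓ₁ : ℓ ≤ brambleOrder B₁)
    (hℓ₂ : ℓ ≤ brambleOrder B₂)
    (hS : ∀ b ∈ B₁, (b ∩ S).Nonempty) (hT : ∀ b ∈ B₂, (b ∩ T).Nonempty)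
    (hX : G.Separates S T X) (hXfin : X.Finite) : ℓ ≤ X.ncard := by
  by_contra! hlt
  obtain ⟨b₁, hb₁, hb₁X⟩ :=
    exists_mem_disjoint_of_ncard_lt_brambleOrder hXfin (hlt.trans_le hℓ₁)
  obtain ⟨b₂, hb₂, hb₂X⟩ :=
    exists_mem_disjoint_of_ncard_lt_brambleOrder hXfin (hlt.trans_le hℓ₂)
  obtain ⟨v, hv, hvX⟩ :=
    hX.inter_nonempty_of_induce_connected (hB.2 b₁ (hB₁ hb₁) b₂ (hB₂ hb₂))
    ((hS b₁ hb₁).mono (Set.inter_subset_inter_left _ Set.subset_union_left))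
    ((hT b₂ hb₂).mono (Set.inter_subset_inter_left _ Set.subset_union_right))
  rcases hv with hv | hv
  · exact Set.disjoint_left.mp hb₁X hv hvX
  · exact Set.disjoint_left.mp hb₂X hv hvX

end Bramble

theorem disjoint_paths_of_bramble_general {V : Type*} [Finite V] (G : SimpleGraph V)
    (B : Set (Set V)) (hB : IsBramble G B) (ℓ : ℕ)
    (S T : Set V)
    (hS : ∃ B₁ ⊆ B, ℓ ≤ brambleOrder B₁ ∧ ∀ b ∈ B₁, (b ∩ S).Nonempty)
    (hT : ∃ B₂ ⊆ B, ℓ ≤ brambleOrder B₂ ∧ ∀ b ∈ B₂, (b ∩ T).Nonempty) :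
    ∃ (u v : Fin ℓ → V) (p : ∀ i, G.Walk (u i) (v i)),
      (∀ i, (p i).IsPath ∧ u i ∈ S ∧ v i ∈ T) ∧
      ∀ i j, i ≠ j → ∀ w, w ∈ (p i).support → w ∉ (p j).support := by
  classical
  obtain ⟨B₁, hB₁, hℓ₁, hS₁⟩ := hS
  obtain ⟨B₂, hB₂, hℓ₂, hT₂⟩ := hT
  obtain ⟨u, v, p, hends, hdisj⟩ := hasDisjointWalks_of_forall_separates G S T ℓ fun X hX =>
    hB.le_ncard_of_separates hB₁ hB₂ hℓ₁ hℓ₂ hS₁ hT₂ hX X.toFinite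
  refine ⟨u, v, fun i => (p i).bypass, fun i => ⟨(p i).bypass_isPath, hends i⟩,
    fun i j hij w hi hj => ?_⟩
  exact hdisj hij ((p i).support_bypass_subset_support hi) ((p j).support_bypass_subset_support hj)

/-- Lemma 4.1: given a bramble of order at least `ℓ` and two disjoint vertex
sets `S`, `T` each met by all members of some subbramble of order at least `ℓ`,
there are `ℓ` pairwise vertex-disjoint `S`–`T` paths. -/
theorem disjoint_paths_of_bramble {V : Type*} [Finite V] (G : SimpleGraph V)
    (B : Set (Set V)) (hB : IsBramble G B) (ℓ : ℕ) (hord : ℓ ≤ brambleOrder B)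
    (S T : Set V) (hdisj : Disjoint S T)
    (hS : ∃ B₁ ⊆ B, ℓ ≤ brambleOrder B₁ ∧ ∀ b ∈ B₁, (b ∩ S).Nonempty)
    (hT : ∃ B₂ ⊆ B, ℓ ≤ brambleOrder B₂ ∧ ∀ b ∈ B₂, (b ∩ T).Nonempty) :
    ∃ (u v : Fin ℓ → V) (p : ∀ i, G.Walk (u i) (v i)),
      (∀ i, (p i).IsPath ∧ u i ∈ S ∧ v i ∈ T) ∧
      ∀ i j, i ≠ j → ∀ w, w ∈ (p i).support → w ∉ (p j).support :=
  disjoint_paths_of_bramble_general G B hB ℓ S T hS hT
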